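/- Let 1 < p ≤ 2 and let u, v : Ω → ℝ^N be measurable vector fields on a finite measure space with |u|, |v| ∈ L^p. Then ∫ |u − v|^p ≤ C (∫ (|u|^{p−2}u − |v|^{p−2}v)·(u − v))^{p/2} · (∫ (1 + |u|² + |v|²)^{p/2})^{1 − p/2}, where C depends only on p. -/

import Mathlib

/-!
With `K = (1 + |x|² + |y|²) ^ ((p - 2) / 2)`, the pointwise bound
`(p - 1) / 2 * |x - y|² * K ≤ (|x|^(p-2) x - |y|^(p-2) y) · (x - y)` holds: for fixed `|x|, |y|`
both sides are affine in `s = x · y`, so only `s = ± |x| |y|` need checking, and there it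
follows from the concavity of `t ↦ t ^ (p - 1)` and from `|x|² K ≤ |x|^p`.
Since `|u - v|^p = (|u - v|² K)^(p/2) * ((1 + |u|² + |v|²)^(p/2))^(1 - p/2)`, Hölder's inequality
with exponents `2/p` and `2/(2-p)` gives the claim with `C = (2 / (p - 1)) ^ (p / 2)`.
-/

open MeasureTheory Real
open scoped RealInnerProductSpace

section Scalar

variable {p : ℝ}

lemma rpow_le_rpow_add_mul_sub {q a b : ℝ} (hq0 : 0 ≤ q) (hq1 : q ≤ 1) (ha : 0 < a) (hb : 0 ≤ b) :
    b ^ q ≤ a ^ q + q * a ^ (q - 1) * (b - a) := by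
  have h := rpow_one_add_le_one_add_mul_self (s := b / a - 1)
    (by linarith [div_nonneg hb ha.le]) hq0 hq1
  rw [add_sub_cancel, div_rpow hb ha.le, div_le_iff₀ (rpow_pos_of_pos ha q)] at h
  rw [rpow_sub_one ha.ne']
  calc b ^ q ≤ (1 + q * (b / a - 1)) * a ^ q := h
    _ = a ^ q + q * (a ^ q / a) * (b - a) := by field_simp

lemma rpow_sub_two_mul_sq {x : ℝ} (hx : 0 ≤ x) (hp : p ≠ 0) : x ^ (p - 2) * x ^ 2 = x ^ p := by
  rw [← rpow_natCast, ← rpow_add' hx (by simpa using hp)]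
  norm_num

lemma rpow_sub_two_mul_self {x : ℝ} (hx : 0 ≤ x) (hp : p ≠ 1) : x ^ (p - 2) * x = x ^ (p - 1) := by
  rw [← rpow_add_one' hx (by contrapose! hp; linarith)]
  ring_nf

lemma sq_rpow_div_two {x : ℝ} (hx : 0 ≤ x) : (x ^ 2) ^ (p / 2) = x ^ p := by
  rw [← rpow_natCast, ← rpow_mul hx]
  congr 1
  ring

lemma rpow_div_two_sub_one_le {a c : ℝ} (hp : p ≤ 2) (ha : 0 < a) (hc : a ^ 2 ≤ c) :
    c ^ ((p - 2) / 2) ≤ a ^ (p - 2) := by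
  calc c ^ ((p - 2) / 2) ≤ (a ^ 2) ^ ((p - 2) / 2) :=
        rpow_le_rpow_of_nonpos (by positivity) hc (by linarith)
    _ = a ^ (p - 2) := sq_rpow_div_two ha.le

lemma sq_mul_rpow_div_two_sub_one_le {a c : ℝ} (hp0 : p ≠ 0) (hp : p ≤ 2) (ha : 0 ≤ a)
    (hc : a ^ 2 ≤ c) : a ^ 2 * c ^ ((p - 2) / 2) ≤ a ^ p := by
  rcases ha.eq_or_lt with rfl | ha
  · simp [zero_rpow hp0]
  calc a ^ 2 * c ^ ((p - 2) / 2) ≤ a ^ 2 * a ^ (p - 2) := by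
        gcongr; exact rpow_div_two_sub_one_le hp ha hc
    _ = a ^ p := by rw [mul_comm, rpow_sub_two_mul_sq ha.le hp0]

lemma le_of_abs_le_of_mul_le_of_mul_neg_le {α β c s : ℝ} (hs : |s| ≤ c) (h₁ : β * c ≤ α)
    (h₂ : β * -c ≤ α) : β * s ≤ α := by
  rcases le_total 0 β with hβ | hβ
  · exact (mul_le_mul_of_nonneg_left (le_of_abs_le hs) hβ).trans h₁
  · exact (mul_le_mul_of_nonpos_left (neg_le_of_abs_le hs) hβ).trans h₂

lemma oden_scalar_aligned (hp : 1 < p) (hp2 : p ≤ 2) {a b : ℝ} (hb : 0 ≤ b) (hba : b ≤ a) :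
    (p - 1) / 2 * (a ^ 2 + b ^ 2 - 2 * (a * b)) * (1 + a ^ 2 + b ^ 2) ^ ((p - 2) / 2) ≤
      a ^ p + b ^ p - (a ^ (p - 2) + b ^ (p - 2)) * (a * b) := by
  rcases (hb.trans hba).eq_or_lt with rfl | ha
  · obtain rfl : b = 0 := le_antisymm hba hb
    simp [zero_rpow (by linarith : p ≠ 0)]
  have hK : (1 + a ^ 2 + b ^ 2) ^ ((p - 2) / 2) ≤ a ^ (p - 2) :=
    rpow_div_two_sub_one_le hp2 ha (by nlinarith)
  have htangent : b ^ (p - 1) ≤ a ^ (p - 1) + (p - 1) * a ^ (p - 2) * (b - a) := by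
    have := rpow_le_rpow_add_mul_sub (by linarith) (by linarith) ha hb (q := p - 1)
    rwa [show p - 1 - 1 = p - 2 by ring] at this
  rw [← rpow_sub_two_mul_self ha.le hp.ne', ← rpow_sub_two_mul_self hb hp.ne'] at htangent
  rw [← rpow_sub_two_mul_sq ha.le (by linarith), ← rpow_sub_two_mul_sq hb (by linarith)]
  have hab : 0 ≤ a - b := by linarith
  rw [show a ^ 2 + b ^ 2 - 2 * (a * b) = (a - b) ^ 2 by ring]
  calc (p - 1) / 2 * (a - b) ^ 2 * (1 + a ^ 2 + b ^ 2) ^ ((p - 2) / 2)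
      ≤ (p - 1) * (a - b) ^ 2 * (1 + a ^ 2 + b ^ 2) ^ ((p - 2) / 2) := by
        gcongr ?_ * _ * _
        linarith
    _ ≤ (p - 1) * (a - b) ^ 2 * a ^ (p - 2) := by gcongr
    _ ≤ (a ^ (p - 2) * a - b ^ (p - 2) * b) * (a - b) := by
        nlinarith [mul_le_mul_of_nonneg_right htangent hab]
    _ = _ := by ring

lemma oden_scalar_opposite (hp : 1 < p) (hp2 : p ≤ 2) {a b : ℝ} (ha : 0 ≤ a) (hb : 0 ≤ b) :
    (p - 1) / 2 * (a ^ 2 + b ^ 2 - 2 * -(a * b)) * (1 + a ^ 2 + b ^ 2) ^ ((p - 2) / 2) ≤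
      a ^ p + b ^ p - (a ^ (p - 2) + b ^ (p - 2)) * -(a * b) := by
  have hpa := sq_mul_rpow_div_two_sub_one_le (by linarith) hp2 ha
    (by nlinarith : a ^ 2 ≤ 1 + a ^ 2 + b ^ 2)
  have hpb := sq_mul_rpow_div_two_sub_one_le (by linarith) hp2 hb
    (by nlinarith : b ^ 2 ≤ 1 + a ^ 2 + b ^ 2)
  have hcross : 0 ≤ (a ^ (p - 2) + b ^ (p - 2)) * (a * b) := by positivity
  have hsq : (a ^ 2 + b ^ 2 - 2 * -(a * b)) ≤ 2 * (a ^ 2 + b ^ 2) := by nlinarith [sq_nonneg (a - b)]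
  calc (p - 1) / 2 * (a ^ 2 + b ^ 2 - 2 * -(a * b)) * (1 + a ^ 2 + b ^ 2) ^ ((p - 2) / 2)
      ≤ (p - 1) / 2 * (2 * (a ^ 2 + b ^ 2)) * (1 + a ^ 2 + b ^ 2) ^ ((p - 2) / 2) := by gcongr
    _ ≤ (p - 1) * (a ^ p + b ^ p) := by nlinarith
    _ ≤ _ := by nlinarith [rpow_nonneg ha p, rpow_nonneg hb p]

lemma oden_scalar (hp : 1 < p) (hp2 : p ≤ 2) {a b s : ℝ} (ha : 0 ≤ a) (hb : 0 ≤ b)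
    (hs : |s| ≤ a * b) :
    (p - 1) / 2 * (a ^ 2 + b ^ 2 - 2 * s) * (1 + a ^ 2 + b ^ 2) ^ ((p - 2) / 2) ≤
      a ^ p + b ^ p - (a ^ (p - 2) + b ^ (p - 2)) * s := by
  have haligned : (p - 1) / 2 * (a ^ 2 + b ^ 2 - 2 * (a * b)) *
      (1 + a ^ 2 + b ^ 2) ^ ((p - 2) / 2) ≤
      a ^ p + b ^ p - (a ^ (p - 2) + b ^ (p - 2)) * (a * b) := by
    rcases le_total b a with hba | hab
    · exact oden_scalar_aligned hp hp2 hb hba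
    · have := oden_scalar_aligned hp hp2 ha hab
      rw [add_right_comm 1 (b ^ 2)] at this
      linarith
  have hopposite := oden_scalar_opposite hp hp2 ha hb
  set K := (1 + a ^ 2 + b ^ 2) ^ ((p - 2) / 2)
  have := le_of_abs_le_of_mul_le_of_mul_neg_le
    (α := a ^ p + b ^ p - (p - 1) / 2 * (a ^ 2 + b ^ 2) * K)
    (β := a ^ (p - 2) + b ^ (p - 2) - (p - 1) * K) hs (by linarith) (by linarith)
  linarith

lemma one_add_sq_add_sq_rpow_le (hp0 : 0 ≤ p) (hp2 : p ≤ 2) {a b : ℝ} (ha : 0 ≤ a) (hb : 0 ≤ b) :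
    (1 + a ^ 2 + b ^ 2) ^ (p / 2) ≤ 1 + a ^ p + b ^ p := by
  have h0 : 0 ≤ p / 2 := by positivity
  have h1 : p / 2 ≤ 1 := by linarith
  calc (1 + a ^ 2 + b ^ 2) ^ (p / 2) ≤ (1 + a ^ 2) ^ (p / 2) + (b ^ 2) ^ (p / 2) :=
        rpow_add_le_add_rpow (by positivity) (by positivity) h0 h1
    _ ≤ 1 ^ (p / 2) + (a ^ 2) ^ (p / 2) + (b ^ 2) ^ (p / 2) := by
        gcongr; exact rpow_add_le_add_rpow zero_le_one (by positivity) h0 h1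
    _ = 1 + a ^ p + b ^ p := by rw [one_rpow, sq_rpow_div_two ha, sq_rpow_div_two hb]

lemma rpow_eq_sq_mul_rpow_rpow_mul_rpow_rpow {r c : ℝ} (hr : 0 ≤ r) (hc : 0 < c) :
    r ^ p = (r ^ 2 * c ^ ((p - 2) / 2)) ^ (p / 2) * (c ^ (p / 2)) ^ (1 - p / 2) := by
  rw [mul_rpow (by positivity) (by positivity), sq_rpow_div_two hr, mul_assoc,
    ← rpow_mul hc.le, ← rpow_mul hc.le, ← rpow_add hc]
  ring_nf
  rw [rpow_zero, mul_one]

end Scalar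

section Holder

variable {α : Type*} [MeasurableSpace α] {μ : Measure α}

lemma integral_rpow_mul_rpow_le {f g : α → ℝ} (hf0 : 0 ≤ᵐ[μ] f) (hg0 : 0 ≤ᵐ[μ] g)
    (hf : Integrable f μ) (hg : Integrable g μ) {θ : ℝ} (hθ0 : 0 ≤ θ) (hθ1 : θ ≤ 1) :
    ∫ x, f x ^ θ * g x ^ (1 - θ) ∂μ ≤ (∫ x, f x ∂μ) ^ θ * (∫ x, g x ∂μ) ^ (1 - θ) := by
  have hfg0 : 0 ≤ᵐ[μ] fun x => f x ^ θ * g x ^ (1 - θ) := by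
    filter_upwards [hf0, hg0] with x hfx hgx
    exact mul_nonneg (rpow_nonneg hfx _) (rpow_nonneg hgx _)
  have hfg : AEStronglyMeasurable (fun x => f x ^ θ * g x ^ (1 - θ)) μ :=
    ((hf.1.aemeasurable.pow_const θ).mul (hg.1.aemeasurable.pow_const _)).aestronglyMeasurable
  rw [integral_eq_lintegral_of_nonneg_ae hfg0 hfg, integral_eq_lintegral_of_nonneg_ae hf0 hf.1,
    integral_eq_lintegral_of_nonneg_ae hg0 hg.1, ENNReal.toReal_rpow, ENNReal.toReal_rpow,
    ← ENNReal.toReal_mul]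
  refine ENNReal.toReal_mono (ENNReal.mul_ne_top
    (ENNReal.rpow_ne_top_of_nonneg hθ0 hf.lintegral_lt_top.ne)
    (ENNReal.rpow_ne_top_of_nonneg (by linarith) hg.lintegral_lt_top.ne)) ?_
  calc ∫⁻ x, ENNReal.ofReal (f x ^ θ * g x ^ (1 - θ)) ∂μ
      = ∫⁻ x, ENNReal.ofReal (f x) ^ θ * ENNReal.ofReal (g x) ^ (1 - θ) ∂μ := by
        refine lintegral_congr_ae ?_
        filter_upwards [hf0, hg0] with x hfx hgx
        rw [ENNReal.ofReal_mul (rpow_nonneg hfx _), ENNReal.ofReal_rpow_of_nonneg hfx hθ0,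
          ENNReal.ofReal_rpow_of_nonneg hgx (by linarith)]
    _ ≤ _ := ENNReal.lintegral_mul_norm_pow_le hf.1.aemeasurable.ennreal_ofReal
        hg.1.aemeasurable.ennreal_ofReal hθ0 (by linarith) (by ring)

end Holder

section InnerProductSpace

variable {E : Type*} [NormedAddCommGroup E] [InnerProductSpace ℝ E] {p : ℝ}

lemma inner_rpow_smul_sub_rpow_smul (hp : p ≠ 0) (x y : E) :
    ⟪‖x‖ ^ (p - 2) • x - ‖y‖ ^ (p - 2) • y, x - y⟫ =
      ‖x‖ ^ p + ‖y‖ ^ p - (‖x‖ ^ (p - 2) + ‖y‖ ^ (p - 2)) * ⟪x, y⟫ := by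
  simp only [inner_sub_left, inner_sub_right, real_inner_smul_left, real_inner_self_eq_norm_sq,
    real_inner_comm x y]
  rw [← rpow_sub_two_mul_sq (norm_nonneg x) hp, ← rpow_sub_two_mul_sq (norm_nonneg y) hp]
  ring

theorem oden_inequality (hp : 1 < p) (hp2 : p ≤ 2) (x y : E) :
    (p - 1) / 2 * ‖x - y‖ ^ 2 * (1 + ‖x‖ ^ 2 + ‖y‖ ^ 2) ^ ((p - 2) / 2) ≤
      ⟪‖x‖ ^ (p - 2) • x - ‖y‖ ^ (p - 2) • y, x - y⟫ := by
  rw [inner_rpow_smul_sub_rpow_smul (by linarith), norm_sub_sq_real]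
  linarith [oden_scalar hp hp2 (norm_nonneg x) (norm_nonneg y) (abs_real_inner_le_norm x y)]

lemma abs_inner_rpow_smul_sub_rpow_smul_le (hp : 1 < p) (hp2 : p ≤ 2) (x y : E) :
    |⟪‖x‖ ^ (p - 2) • x - ‖y‖ ^ (p - 2) • y, x - y⟫| ≤ 2 * (‖x‖ ^ p + ‖y‖ ^ p) := by
  have hp1 : 0 < p - 1 := by linarith
  have hnonneg : 0 ≤ (p - 1) / 2 * ‖x - y‖ ^ 2 * (1 + ‖x‖ ^ 2 + ‖y‖ ^ 2) ^ ((p - 2) / 2) := by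
    positivity
  have hnonneg' : 0 ≤ (p - 1) / 2 * (‖x‖ ^ 2 + ‖y‖ ^ 2 - 2 * (‖x‖ * ‖y‖)) *
      (1 + ‖x‖ ^ 2 + ‖y‖ ^ 2) ^ ((p - 2) / 2) := by
    rw [show ‖x‖ ^ 2 + ‖y‖ ^ 2 - 2 * (‖x‖ * ‖y‖) = (‖x‖ - ‖y‖) ^ 2 by ring]
    positivity
  -- the aligned case `s = ‖x‖ * ‖y‖` of `oden_scalar` bounds the cross term
  have hcross := oden_scalar hp hp2 (norm_nonneg x) (norm_nonneg y)
    (abs_of_nonneg (by positivity : 0 ≤ ‖x‖ * ‖y‖)).le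
  have hweights : 0 ≤ ‖x‖ ^ (p - 2) + ‖y‖ ^ (p - 2) := by positivity
  have hs := neg_le_of_abs_le (abs_real_inner_le_norm x y)
  have hmul := mul_le_mul_of_nonneg_left hs hweights
  rw [abs_of_nonneg (hnonneg.trans (oden_inequality hp hp2 x y)),
    inner_rpow_smul_sub_rpow_smul (by linarith)]
  linarith

end InnerProductSpace

section Integral

variable {α E : Type*} [MeasurableSpace α] {μ : Measure α} [NormedAddCommGroup E]
  {u v : α → E} {p : ℝ}

lemma aemeasurable_one_add_norm_sq_add_norm_sq (hu : AEStronglyMeasurable u μ)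
    (hv : AEStronglyMeasurable v μ) : AEMeasurable (fun x => 1 + ‖u x‖ ^ 2 + ‖v x‖ ^ 2) μ :=
  (aemeasurable_const.add (hu.norm.aemeasurable.pow_const 2)).add (hv.norm.aemeasurable.pow_const 2)

lemma integrable_one_add_sq_add_sq_rpow [IsFiniteMeasure μ] (hp0 : 0 ≤ p) (hp2 : p ≤ 2)
    (hu : AEStronglyMeasurable u μ) (hv : AEStronglyMeasurable v μ)
    (hup : Integrable (fun x => ‖u x‖ ^ p) μ) (hvp : Integrable (fun x => ‖v x‖ ^ p) μ) :
    Integrable (fun x => (1 + ‖u x‖ ^ 2 + ‖v x‖ ^ 2) ^ (p / 2)) μ := by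
  have hmeas : AEStronglyMeasurable (fun x => (1 + ‖u x‖ ^ 2 + ‖v x‖ ^ 2) ^ (p / 2)) μ :=
    ((aemeasurable_one_add_norm_sq_add_norm_sq hu hv).pow_const _).aestronglyMeasurable
  refine (((integrable_const 1).add hup).add hvp).mono' hmeas (ae_of_all _ fun x => ?_)
  rw [norm_of_nonneg (by positivity)]
  exact one_add_sq_add_sq_rpow_le hp0 hp2 (norm_nonneg _) (norm_nonneg _)

variable [InnerProductSpace ℝ E]

lemma integrable_inner_rpow_smul_sub_rpow_smul (hp : 1 < p) (hp2 : p ≤ 2)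
    (hu : AEStronglyMeasurable u μ) (hv : AEStronglyMeasurable v μ)
    (hup : Integrable (fun x => ‖u x‖ ^ p) μ) (hvp : Integrable (fun x => ‖v x‖ ^ p) μ) :
    Integrable (fun x => ⟪‖u x‖ ^ (p - 2) • u x - ‖v x‖ ^ (p - 2) • v x, u x - v x⟫) μ := by
  have hmeas : AEStronglyMeasurable
      (fun x => ⟪‖u x‖ ^ (p - 2) • u x - ‖v x‖ ^ (p - 2) • v x, u x - v x⟫) μ :=
    ((((hu.norm.aemeasurable.pow_const _).aestronglyMeasurable.smul hu).sub
      ((hv.norm.aemeasurable.pow_const _).aestronglyMeasurable.smul hv))).inner (hu.sub hv)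
  refine ((hup.add hvp).const_mul 2).mono' hmeas (ae_of_all _ fun x => ?_)
  exact abs_inner_rpow_smul_sub_rpow_smul_le hp hp2 (u x) (v x)

theorem integral_norm_sub_rpow_le [IsFiniteMeasure μ] (hp : 1 < p) (hp2 : p ≤ 2)
    (hu : AEStronglyMeasurable u μ) (hv : AEStronglyMeasurable v μ)
    (hup : Integrable (fun x => ‖u x‖ ^ p) μ) (hvp : Integrable (fun x => ‖v x‖ ^ p) μ) :
    ∫ x, ‖u x - v x‖ ^ p ∂μ ≤
      (2 / (p - 1)) ^ (p / 2) *
        (∫ x, ⟪‖u x‖ ^ (p - 2) • u x - ‖v x‖ ^ (p - 2) • v x, u x - v x⟫ ∂μ) ^ (p / 2) *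
        (∫ x, (1 + ‖u x‖ ^ 2 + ‖v x‖ ^ 2) ^ (p / 2) ∂μ) ^ (1 - p / 2) := by
  have hp1 : 0 < p - 1 := by linarith
  set D := fun x => ⟪‖u x‖ ^ (p - 2) • u x - ‖v x‖ ^ (p - 2) • v x, u x - v x⟫
  set K := fun x => 1 + ‖u x‖ ^ 2 + ‖v x‖ ^ 2
  set W := fun x => ‖u x - v x‖ ^ 2 * K x ^ ((p - 2) / 2)
  have hW0 (x : α) : 0 ≤ W x := by positivity
  have hWD (x : α) : W x ≤ 2 / (p - 1) * D x := by
    rw [div_mul_eq_mul_div, le_div_iff₀ hp1]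
    linarith [oden_inequality hp hp2 (u x) (v x)]
  have hD0 (x : α) : 0 ≤ D x :=
    (mul_nonneg_iff_of_pos_left (by positivity)).1 ((hW0 x).trans (hWD x))
  have hDi : Integrable D μ := integrable_inner_rpow_smul_sub_rpow_smul hp hp2 hu hv hup hvp
  have hWi : Integrable W μ := by
    refine (hDi.const_mul _).mono' ?_ (ae_of_all _ fun x => by
      rw [norm_of_nonneg (hW0 x)]; exact hWD x)
    exact (((hu.sub hv).norm.aemeasurable.pow_const 2).mul
      ((aemeasurable_one_add_norm_sq_add_norm_sq hu hv).pow_const _)).aestronglyMeasurable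
  have hMi := integrable_one_add_sq_add_sq_rpow (by linarith) hp2 hu hv hup hvp
  calc ∫ x, ‖u x - v x‖ ^ p ∂μ = ∫ x, W x ^ (p / 2) * (K x ^ (p / 2)) ^ (1 - p / 2) ∂μ :=
        integral_congr_ae (ae_of_all _ fun x =>
          rpow_eq_sq_mul_rpow_rpow_mul_rpow_rpow (norm_nonneg _) (by positivity))
    _ ≤ (∫ x, W x ∂μ) ^ (p / 2) * (∫ x, K x ^ (p / 2) ∂μ) ^ (1 - p / 2) :=
        integral_rpow_mul_rpow_le (ae_of_all _ hW0) (ae_of_all _ fun x => by positivity)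
          hWi hMi (by positivity) (by linarith)
    _ ≤ (2 / (p - 1) * ∫ x, D x ∂μ) ^ (p / 2) * (∫ x, K x ^ (p / 2) ∂μ) ^ (1 - p / 2) := by
        rw [← integral_const_mul]
        gcongr ?_ ^ _ * _
        exact integral_mono hWi (hDi.const_mul _) hWD
    _ = _ := by rw [mul_rpow (by positivity) (integral_nonneg hD0)]

end Integral

theorem stmt_9 (p : ℝ) (hp : 1 < p) (hp2 : p ≤ 2) :
    ∃ C : ℝ, 0 < C ∧
      ∀ (N : ℕ) (Ω : Type) (_ : MeasurableSpace Ω) (μ : Measure Ω),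
        IsFiniteMeasure μ →
        ∀ (u v : Ω → EuclideanSpace ℝ (Fin N)),
          Measurable u → Measurable v →
          Integrable (fun x => ‖u x‖ ^ p) μ →
          Integrable (fun x => ‖v x‖ ^ p) μ →
          ∫ x, ‖u x - v x‖ ^ p ∂μ ≤
            C * (∫ x, (inner ℝ ((‖u x‖ ^ (p - 2)) • u x - (‖v x‖ ^ (p - 2)) • v x)
                    (u x - v x) : ℝ) ∂μ) ^ (p / 2) *
              (∫ x, (1 + ‖u x‖ ^ 2 + ‖v x‖ ^ 2) ^ (p / 2) ∂μ) ^ (1 - p / 2) := by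
  have hp1 : 0 < p - 1 := by linarith
  refine ⟨(2 / (p - 1)) ^ (p / 2), by positivity, ?_⟩
  intro N Ω _ μ _ u v hu hv hup hvp
  exact integral_norm_sub_rpow_le hp hp2 hu.aestronglyMeasurable hv.aestronglyMeasurable hup hvp
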